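/- Let G' = (V', E') be a finite simple graph and k a natural number. Consider the network with graph G₀ = G', V_src = V_ld = V', and α = |E'|. Then G' has a vertex cover of size at most k if and only if there exists an attack V_a ⊆ V' with |V_a| ≤ k such that p(V_a, ∅) ≥ |V'| (i.e., every load node is disconnected). -/

import Mathlib

/-! With every vertex both a source and a load, the nearest sources of `t` are its neighbours
and the edge `st` is the unique shortest path between adjacent `s, t`; hence in any graph `H`
the load of an edge `ab` is `1/deg_H a + 1/deg_H b ∈ (0, 2]`. Since every degree of `G'` is at
most `|E'|`, the capacity of `ab` is at least `(1 + |E'|) · 2/|E'| > 2`, so no edge of a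
subgraph of `G'` ever fails and `F*(G' − V_a) = G' − V_a`. All load nodes are then
disconnected iff `G' − V_a` has no edge, i.e. iff `V_a` is a vertex cover of `G'`. -/

open scoped Classical

noncomputable section

variable {V : Type*} [Fintype V] [DecidableEq V]

/-- The number of shortest paths between `s` and `t` in `G` (σ_G(s,t)). -/
def numSP (G : SimpleGraph V) (s t : V) : ℕ :=
  Nat.card {w : G.Walk s t // w.length = G.dist s t}

/-- The number of shortest paths between `s` and `t` in `G` passing through edge `e`
(σ_G(s,t | e)). -/
def numSPthru (G : SimpleGraph V) (s t : V) (e : Sym2 V) : ℕ :=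
  Nat.card {w : G.Walk s t // w.length = G.dist s t ∧ e ∈ w.edges}

/-- `N_G(t)`: the vertices of `Vsrc \ {t}` reachable from `t` in `G` at minimum distance
from `t`. -/
def nearestSources (Vsrc : Finset V) (G : SimpleGraph V) (t : V) : Finset V :=
  ((Vsrc.erase t).filter (fun s => G.Reachable t s)).filter
    (fun s => ∀ s' ∈ (Vsrc.erase t).filter (fun s'' => G.Reachable t s''),
      G.dist t s ≤ G.dist t s')

/-- The load of edge `e` in `G`:
`load_G(e) = Σ_{t ∈ Vld} Σ_{s ∈ N_G(t)} σ_G(s,t|e) / (|N_G(t)|·σ_G(s,t))`. -/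
def eload (Vsrc Vld : Finset V) (G : SimpleGraph V) (e : Sym2 V) : ℝ :=
  ∑ t ∈ Vld, ∑ s ∈ nearestSources Vsrc G t,
    (numSPthru G s t e : ℝ) / (((nearestSources Vsrc G t).card : ℝ) * (numSP G s t : ℝ))

/-- The failure operator: removes every edge whose current load exceeds its capacity
`c_e = (1+α)·load_{G₀}(e)`. -/
def Fop (Vsrc Vld : Finset V) (G0 : SimpleGraph V) (α : ℝ) (G : SimpleGraph V) :
    SimpleGraph V where
  Adj u v := G.Adj u v ∧ eload Vsrc Vld G s(u, v) ≤ (1 + α) * eload Vsrc Vld G0 s(u, v)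
  symm := ⟨by
    intro u v h
    refine ⟨h.1.symm, ?_⟩
    rw [Sym2.eq_swap]
    exact h.2⟩
  loopless := ⟨fun v h => G.irrefl h.1⟩

/-- `F*(G)`: the fixed point reached by iterating the failure operator (reached after at
most `|E|+1 ≤ (card V)^2` applications, since each non-trivial application removes an edge). -/
def Fstar (Vsrc Vld : Finset V) (G0 : SimpleGraph V) (α : ℝ) (G : SimpleGraph V) :
    SimpleGraph V :=
  (Fop Vsrc Vld G0 α)^[Fintype.card V ^ 2] G

/-- `G − S`: the (induced) subgraph obtained by deleting the vertices of `S`. -/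
def deleteVerts (G : SimpleGraph V) (S : Finset V) : SimpleGraph V where
  Adj u v := G.Adj u v ∧ u ∉ S ∧ v ∉ S
  symm := ⟨fun u v h => ⟨h.1.symm, h.2.2, h.2.1⟩⟩
  loopless := ⟨fun v h => G.irrefl h.1⟩

/-- `disc(G)`: the number of load nodes from which no source (other than itself) is
reachable in `G`. -/
def disc (Vsrc Vld : Finset V) (G : SimpleGraph V) : ℕ :=
  (Vld.filter (fun t => ∀ s ∈ Vsrc, s ≠ t → ¬ G.Reachable t s)).card

/-- The payoff `p(V_a,V_d) = disc(F*(G₀ − (V_a \ V_d)))`. -/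
def payoff (Vsrc Vld : Finset V) (G0 : SimpleGraph V) (α : ℝ) (Va Vd : Finset V) : ℕ :=
  disc Vsrc Vld (Fstar Vsrc Vld G0 α (deleteVerts G0 (Va \ Vd)))

namespace SimpleGraph

omit [Fintype V] [DecidableEq V] in
lemma Walk.eq_toWalk_of_length_eq_one {G : SimpleGraph V} {s t : V} (h : G.Adj s t)
    (w : G.Walk s t) (hw : w.length = 1) : w = h.toWalk := by
  cases w with
  | nil => simp at hw
  | cons _ p => cases p with
    | nil => rfl
    | cons _ _ => simp at hw

omit [Fintype V] [DecidableEq V] in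
lemma length_eq_dist_iff_eq_toWalk {G : SimpleGraph V} {s t : V} (h : G.Adj s t)
    (w : G.Walk s t) : w.length = G.dist s t ↔ w = h.toWalk := by
  rw [dist_eq_one_iff_adj.mpr h]
  exact ⟨Walk.eq_toWalk_of_length_eq_one h w, fun hw => hw ▸ rfl⟩

omit [DecidableEq V] in
lemma degree_le_ncard_edgeSet (G : SimpleGraph V) (a : V) : G.degree a ≤ G.edgeSet.ncard := by
  rw [← coe_edgeFinset, Set.ncard_coe_finset]
  exact G.degree_le_card_edgeFinset a

end SimpleGraph

open SimpleGraph

omit [Fintype V] [DecidableEq V] in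
lemma numSP_of_adj {G : SimpleGraph V} {s t : V} (h : G.Adj s t) : numSP G s t = 1 := by
  simp_rw [numSP, length_eq_dist_iff_eq_toWalk h]
  exact Nat.card_unique

omit [Fintype V] in
lemma numSPthru_of_adj {G : SimpleGraph V} {s t : V} (h : G.Adj s t) (e : Sym2 V) :
    numSPthru G s t e = if e = s(s, t) then 1 else 0 := by
  have edges_toWalk : ∀ w : G.Walk s t,
      (w = h.toWalk ∧ e ∈ w.edges) ↔ (w = h.toWalk ∧ e = s(s, t)) := by
    intro w
    constructor <;> rintro ⟨rfl, he⟩ <;> simp_all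
  simp_rw [numSPthru, length_eq_dist_iff_eq_toWalk h, edges_toWalk]
  split_ifs with he <;> simp [he]

lemma nearestSources_univ (G : SimpleGraph V) (t : V) :
    nearestSources Finset.univ G t = G.neighborFinset t := by
  ext s
  simp only [nearestSources, Finset.mem_filter, Finset.mem_erase, Finset.mem_univ, and_true,
    mem_neighborFinset]
  constructor
  · rintro ⟨⟨hst, hreach⟩, hmin⟩
    obtain ⟨b, hb⟩ := hreach.nonempty_neighborSet_left (Ne.symm hst)
    have hle : G.dist t s ≤ 1 := dist_eq_one_iff_adj.mpr hb ▸ hmin b ⟨hb.ne', hb.reachable⟩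
    have hpos : 0 < G.dist t s := hreach.pos_dist_of_ne (Ne.symm hst)
    exact dist_eq_one_iff_adj.mp (by omega)
  · intro hadj
    refine ⟨⟨hadj.ne', hadj.reachable⟩, fun s' ⟨hs't, hreach⟩ => ?_⟩
    rw [dist_eq_one_iff_adj.mpr hadj]
    exact hreach.pos_dist_of_ne (Ne.symm hs't)

lemma eload_univ_of_adj {G : SimpleGraph V} {u v : V} (huv : G.Adj u v) :
    eload Finset.univ Finset.univ G s(u, v) = (G.degree u : ℝ)⁻¹ + (G.degree v : ℝ)⁻¹ := by
  have hterm : ∀ t, ∀ s ∈ G.neighborFinset t,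
      (numSPthru G s t s(u, v) : ℝ) / ((G.neighborFinset t).card * numSP G s t) =
        if t = u ∧ s = v ∨ t = v ∧ s = u then (G.degree t : ℝ)⁻¹ else 0 := by
    intro t s hs
    have hst := (mem_neighborFinset G t s).mp hs
    rw [numSPthru_of_adj hst.symm, numSP_of_adj hst.symm, card_neighborFinset_eq_degree]
    have hedge : s(u, v) = s(s, t) ↔ t = u ∧ s = v ∨ t = v ∧ s = u := by
      rw [Sym2.eq_iff]; tauto
    simp only [hedge]
    split_ifs <;> simp
  simp_rw [eload, nearestSources_univ]
  rw [Finset.sum_congr rfl fun t _ => Finset.sum_congr rfl (hterm t),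
    Fintype.sum_eq_add u v huv.ne fun t ⟨htu, htv⟩ => by simp [htu, htv]]
  simp [huv, huv.symm, huv.ne, huv.ne']

lemma eload_univ_le_two {H : SimpleGraph V} {a b : V} (h : H.Adj a b) :
    eload Finset.univ Finset.univ H s(a, b) ≤ 2 := by
  have inv_degree_le_one : ∀ {x y}, H.Adj x y → (H.degree x : ℝ)⁻¹ ≤ 1 := fun hxy =>
    inv_le_one_of_one_le₀ (by exact_mod_cast (H.degree_pos_iff_exists_adj _).mpr ⟨_, hxy⟩)
  rw [eload_univ_of_adj h]
  linarith [inv_degree_le_one h, inv_degree_le_one h.symm]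

lemma two_le_capacity_univ {G : SimpleGraph V} {a b : V} (h : G.Adj a b) :
    2 ≤ (1 + (G.edgeSet.ncard : ℝ)) * eload Finset.univ Finset.univ G s(a, b) := by
  set E : ℝ := (G.edgeSet.ncard : ℝ) with hE_def
  have degree_pos : ∀ {x y}, G.Adj x y → (0 : ℝ) < G.degree x := fun hxy => by
    exact_mod_cast (G.degree_pos_iff_exists_adj _).mpr ⟨_, hxy⟩
  have degree_le : ∀ x, (G.degree x : ℝ) ≤ E := fun x => by
    rw [hE_def]; exact_mod_cast G.degree_le_ncard_edgeSet x
  have hE : 0 < E := (degree_pos h).trans_le (degree_le a)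
  rw [eload_univ_of_adj h]
  calc (2 : ℝ) ≤ (1 + E) * (E⁻¹ + E⁻¹) := by
        field_simp
        linarith
    _ ≤ (1 + E) * ((G.degree a : ℝ)⁻¹ + (G.degree b : ℝ)⁻¹) := by
        gcongr
        exacts [degree_pos h, degree_le a, degree_pos h.symm, degree_le b]

lemma Fop_univ_eq_self_of_le {G₀ H : SimpleGraph V} (hle : H ≤ G₀) :
    Fop Finset.univ Finset.univ G₀ G₀.edgeSet.ncard H = H := by
  ext a b
  exact ⟨And.left, fun h => ⟨h, (eload_univ_le_two h).trans (two_le_capacity_univ (hle h))⟩⟩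

lemma Fstar_univ_eq_self_of_le {G₀ H : SimpleGraph V} (hle : H ≤ G₀) :
    Fstar Finset.univ Finset.univ G₀ G₀.edgeSet.ncard H = H :=
  Function.iterate_fixed (Fop_univ_eq_self_of_le hle) _

lemma card_le_disc_univ_iff {H : SimpleGraph V} :
    Fintype.card V ≤ disc Finset.univ Finset.univ H ↔ H = ⊥ := by
  rw [disc, (Finset.card_le_univ _).ge_iff_eq, ← Finset.card_univ, Finset.card_filter_eq_iff]
  simp only [Finset.mem_univ, forall_const]
  constructor
  · intro hdisc
    exact eq_bot_iff_forall_not_adj.mpr fun a b hab => hdisc a b hab.ne' hab.reachable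
  · rintro rfl t s hst hreach
    exact hst (reachable_bot.mp hreach).symm

omit [Fintype V] [DecidableEq V] in
lemma deleteVerts_le (G : SimpleGraph V) (S : Finset V) : deleteVerts G S ≤ G :=
  fun _ _ h => h.1

omit [Fintype V] [DecidableEq V] in
lemma deleteVerts_eq_bot_iff {G : SimpleGraph V} {S : Finset V} :
    deleteVerts G S = ⊥ ↔ G.IsVertexCover S := by
  simp only [eq_bot_iff_forall_not_adj, deleteVerts, IsVertexCover, Finset.mem_coe]
  grind

/-- Correctness of the vertex-cover reduction for the attacker's best response: in the
network with `G₀ = G'`, `V_src = V_ld = V'` and `α = |E'|`, the graph `G'` has a vertex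
cover of size at most `k` iff there is an attack `V_a` with `|V_a| ≤ k` whose payoff
(against the empty defense) is at least `|V'|`, i.e. disconnecting every load node. -/
theorem vertex_cover_iff_attack_disconnects_all {V : Type*} [Fintype V] [DecidableEq V]
    (G' : SimpleGraph V) (k : ℕ) :
    (∃ C : Finset V, C.card ≤ k ∧ ∀ u v : V, G'.Adj u v → u ∈ C ∨ v ∈ C) ↔
      (∃ Va : Finset V, Va.card ≤ k ∧
        Fintype.card V ≤
          payoff Finset.univ Finset.univ G' (G'.edgeSet.ncard : ℝ) Va ∅) := by
  simp only [payoff, Finset.sdiff_empty, Fstar_univ_eq_self_of_le (deleteVerts_le G' _),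
    card_le_disc_univ_iff, deleteVerts_eq_bot_iff]
  rfl

end
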